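/- Let ψ : 𝔫⁺ → ℂ be a Lie algebra homomorphism with ψ(L_1) ≠ 0, ψ(L_2) ≠ 0, ψ(I_1) ≠ 0. For every integer m ≥ 0, every pseudopartition λ and every partition μ, one has maxdeg([L_m, L_{−λ}I_{−μ}]w) ≤ |λ| + |μ| − m + 2 in M_ψ. -/

import Mathlib

/-!
Common setup: the twisted Heisenberg–Virasoro algebra `𝒱`, its subalgebra `𝔫⁺`,
the universal Whittaker module `M_ψ`, the quotients `L_{ψ,ξ}`, and the notions of
Whittaker vectors/modules, degrees, etc.
-/

open UniversalEnvelopingAlgebra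

attribute [local instance 100] LieRing.ofAssociativeRing

/-- The twisted Heisenberg–Virasoro algebra: a complex Lie algebra with basis
`{L k, I k (k : ℤ), z 0, z 1, z 2}` (here `z 0, z 1, z 2` are the paper's `z₁, z₂, z₃`)
and the prescribed brackets. -/
class THV (V : Type) [LieRing V] [LieAlgebra ℂ V] : Type where
  L : ℤ → V
  I : ℤ → V
  z : Fin 3 → V
  basis : Module.Basis (ℤ ⊕ ℤ ⊕ Fin 3) ℂ V
  basis_L : ∀ k : ℤ, basis (Sum.inl k) = L k
  basis_I : ∀ k : ℤ, basis (Sum.inr (Sum.inl k)) = I k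
  basis_z : ∀ i : Fin 3, basis (Sum.inr (Sum.inr i)) = z i
  lie_LL : ∀ k j : ℤ, ⁅L k, L j⁆ =
    ((j : ℂ) - (k : ℂ)) • L (k + j) +
      (if j = -k then ((k : ℂ) ^ 3 - (k : ℂ)) / 12 else 0) • z 0
  lie_LI : ∀ k j : ℤ, ⁅L k, I j⁆ =
    (j : ℂ) • I (k + j) + (if j = -k then (k : ℂ) ^ 2 - (k : ℂ) else 0) • z 1
  lie_II : ∀ k j : ℤ, ⁅I k, I j⁆ = (if j = -k then (k : ℂ) else 0) • z 2
  lie_z : ∀ i : Fin 3, ∀ x : V, ⁅z i, x⁆ = 0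

namespace THV

variable (V : Type) [LieRing V] [LieAlgebra ℂ V] [THV V]

/-- `𝔫⁺ = span {L k, I k : k ≥ 1}` (a Lie subalgebra of `𝒱`). -/
def nPlus : LieSubalgebra ℂ V :=
  LieSubalgebra.lieSpan ℂ V {x | ∃ k : ℤ, 1 ≤ k ∧ (x = L k ∨ x = I k)}

theorem L_mem_nPlus {k : ℤ} (h : 1 ≤ k) : (L k : V) ∈ nPlus V :=
  LieSubalgebra.subset_lieSpan ⟨k, h, Or.inl rfl⟩

theorem I_mem_nPlus {k : ℤ} (h : 1 ≤ k) : (I k : V) ∈ nPlus V :=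
  LieSubalgebra.subset_lieSpan ⟨k, h, Or.inr rfl⟩

/-- A Whittaker vector of type `ψ` in a `𝒱`-module `W`. -/
def IsWhittakerVector (ψ : nPlus V →ₗ⁅ℂ⁆ ℂ) {W : Type} [AddCommGroup W] [Module ℂ W]
    [LieRingModule V W] (w : W) : Prop :=
  ∀ x : nPlus V, ⁅(x : V), w⁆ = ψ x • w

/-- The universal enveloping algebra `U(𝒱)`. -/
abbrev UEA := UniversalEnvelopingAlgebra ℂ V

/-- The canonical embedding `𝒱 → U(𝒱)`. -/
noncomputable def ιV : V →ₗ⁅ℂ⁆ UEA V := UniversalEnvelopingAlgebra.ι ℂ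

/-- The four central elements `z₀ = I₀, z₁, z₂, z₃` of `U(𝒱)`. -/
noncomputable def zElt : Fin 4 → UEA V
  | 0 => ιV V (I 0)
  | 1 => ιV V (z 0)
  | 2 => ιV V (z 1)
  | 3 => ιV V (z 2)

/-- The left ideal of `U(𝒱)` generated by `{x - ψ(x) : x ∈ 𝔫⁺}`;
`M_ψ = U(𝒱) ⊗_{U(𝔫⁺)} ℂ_ψ` is canonically the quotient by this left ideal. -/
noncomputable def whittakerIdeal (ψ : nPlus V →ₗ⁅ℂ⁆ ℂ) : Submodule (UEA V) (UEA V) :=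
  Submodule.span (UEA V)
    {u | ∃ x : nPlus V, u = ιV V (x : V) - algebraMap ℂ (UEA V) (ψ x)}

/-- The universal Whittaker module `M_ψ`. -/
abbrev Mpsi (ψ : nPlus V →ₗ⁅ℂ⁆ ℂ) := (UEA V) ⧸ whittakerIdeal V ψ

/-- Any quotient of `U(𝒱)` (as a left module over itself) is a `𝒱`-module. -/
noncomputable instance (p : Submodule (UEA V) (UEA V)) : LieRingModule V ((UEA V) ⧸ p) :=
  letI : LieRingModule (UEA V) ((UEA V) ⧸ p) := LieRingModule.ofAssociativeModule
  LieRingModule.compLieHom _ (ιV V)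

noncomputable instance (p : Submodule (UEA V) (UEA V)) : LieModule ℂ V ((UEA V) ⧸ p) :=
  letI : LieRingModule (UEA V) ((UEA V) ⧸ p) := LieRingModule.ofAssociativeModule
  letI : LieModule ℂ (UEA V) ((UEA V) ⧸ p) := LieModule.ofAssociativeModule
  LieModule.compLieHom _ (ιV V)

/-- The cyclic Whittaker vector `w = 1 ⊗ 1` of `M_ψ`. -/
noncomputable def mw (ψ : nPlus V →ₗ⁅ℂ⁆ ℂ) : Mpsi V ψ :=
  Submodule.Quotient.mk 1

/-- The submodule `Σ_{i} (z_i − ξ_i·1) M_ψ` of `M_ψ`. -/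
noncomputable def centralSub (ψ : nPlus V →ₗ⁅ℂ⁆ ℂ) (ξ : Fin 4 → ℂ) :
    Submodule (UEA V) (Mpsi V ψ) :=
  Submodule.span (UEA V)
    {m | ∃ i : Fin 4, ∃ y : Mpsi V ψ, m = (zElt V i - algebraMap ℂ (UEA V) (ξ i)) • y}

/-- The Whittaker module `L_{ψ,ξ} = M_ψ / Σᵢ (z_i − ξ_i·1) M_ψ`. -/
abbrev Lpsixi (ψ : nPlus V →ₗ⁅ℂ⁆ ℂ) (ξ : Fin 4 → ℂ) :=
  Mpsi V ψ ⧸ centralSub V ψ ξ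

noncomputable instance (ψ : nPlus V →ₗ⁅ℂ⁆ ℂ) (q : Submodule (UEA V) (Mpsi V ψ)) :
    LieRingModule V ((Mpsi V ψ) ⧸ q) :=
  letI : LieRingModule (UEA V) ((Mpsi V ψ) ⧸ q) := LieRingModule.ofAssociativeModule
  LieRingModule.compLieHom _ (ιV V)

noncomputable instance (ψ : nPlus V →ₗ⁅ℂ⁆ ℂ) (q : Submodule (UEA V) (Mpsi V ψ)) :
    LieModule ℂ V ((Mpsi V ψ) ⧸ q) :=
  letI : LieRingModule (UEA V) ((Mpsi V ψ) ⧸ q) := LieRingModule.ofAssociativeModule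
  letI : LieModule ℂ (UEA V) ((Mpsi V ψ) ⧸ q) := LieModule.ofAssociativeModule
  LieModule.compLieHom _ (ιV V)

/-- The image `w̄` of the cyclic Whittaker vector in `L_{ψ,ξ}`. -/
noncomputable def lw (ψ : nPlus V →ₗ⁅ℂ⁆ ℂ) (ξ : Fin 4 → ℂ) : Lpsixi V ψ ξ :=
  Submodule.Quotient.mk (mw V ψ)

/-- The size `|λ|` of a pseudopartition recorded as its multiplicity function. -/
def pdeg (f : ℕ →₀ ℕ) : ℕ := f.sum fun k m => k * m

/-- `L_{-λ} = L_{-λ_s} ⋯ L_{-λ_1} = ⋯ L_{-1}^{λ(1)} L_0^{λ(0)} ∈ U(𝒱)`,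
for a pseudopartition `λ` given by its multiplicity function. -/
noncomputable def Lword (lam : ℕ →₀ ℕ) : UEA V :=
  (((List.range (lam.support.sup id + 1)).reverse).map
    fun k : ℕ => (ιV V (L (-(k : ℤ)))) ^ (lam k)).prod

/-- `I_{-μ} = I_{-μ_r} ⋯ I_{-μ_1} = ⋯ I_{-2}^{μ(2)} I_{-1}^{μ(1)} ∈ U(𝒱)`. -/
noncomputable def Iword (mu : ℕ →₀ ℕ) : UEA V :=
  (((List.range (mu.support.sup id + 1)).reverse).map
    fun k : ℕ => (ιV V (I (-(k : ℤ)))) ^ (mu k)).prod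

/-- `z^t = z₀^{t₀} z₁^{t₁} z₂^{t₂} z₃^{t₃} ∈ U(𝒱)`. -/
noncomputable def zword (t : Fin 4 → ℕ) : UEA V :=
  ((List.finRange 4).map fun i => (zElt V i) ^ (t i)).prod

/-- Index type for the PBW-type basis of `M_ψ`: a 4-tuple `t`, a pseudopartition `λ`,
and a partition `μ` (a multiplicity function with `μ(0) = 0`). -/
abbrev WIdx : Type := (Fin 4 → ℕ) × (ℕ →₀ ℕ) × {g : ℕ →₀ ℕ // g 0 = 0}

/-- The property that `B` is the standard basis `{z^t L_{-λ} I_{-μ} w}` of `M_ψ`. -/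
def IsStdBasis (ψ : nPlus V →ₗ⁅ℂ⁆ ℂ) (B : Module.Basis WIdx ℂ (Mpsi V ψ)) : Prop :=
  ∀ (t : Fin 4 → ℕ) (lam : ℕ →₀ ℕ) (mu : {g : ℕ →₀ ℕ // g 0 = 0}),
    B (t, lam, mu) = (zword V t * Lword V lam * Iword V mu.1) • mw V ψ

/-- `maxdeg` of a vector of `M_ψ` with respect to the standard basis
(`⊥` plays the role of `-∞`). -/
noncomputable def maxdeg (ψ : nPlus V →ₗ⁅ℂ⁆ ℂ) (B : Module.Basis WIdx ℂ (Mpsi V ψ))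
    (v : Mpsi V ψ) : WithBot ℤ :=
  ((B.repr v).support.image fun p => ((pdeg p.2.1 : ℤ) + (pdeg p.2.2.1 : ℤ))).max

/-- `max_{L_0}` of a vector of `M_ψ`: the largest `λ(0)` over basis vectors occurring
with a nonzero coefficient. -/
noncomputable def maxL0 (ψ : nPlus V →ₗ⁅ℂ⁆ ℂ) (B : Module.Basis WIdx ℂ (Mpsi V ψ))
    (v : Mpsi V ψ) : WithBot ℤ :=
  ((B.repr v).support.image fun p => (p.2.1 0 : ℤ)).max

end THV

/-!
Let `F_N ⊆ M_ψ` be the span of the standard basis vectors of degree at most `N`. Straightening in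
`U(𝒱)` shows that the lowering modes `L_{-s}`, `I_{-i}` (`s, i ≥ 0`) map `F_N` into `F_{N+s}`,
resp. `F_{N+i}`, and that the central elements preserve `F_N`. Now move a mode `L_k` or `I_k` to
the right through a product `u` of lowering modes of total weight `N`: each commutator it meets is
a mode whose index is shifted by the weight of the factor passed, or a central element. By
induction on `u`, `L_k u w ∈ F_{N+2-k}` and `I_k u w ∈ F_{N+1-k}` for every `k ∈ ℤ`. The base case
is the Whittaker condition: `ψ` vanishes on `[𝔫⁺, 𝔫⁺]`, which contains `L_k` for `k ≥ 3` and `I_k`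
for `k ≥ 2`. Finally `[L_m, u] w = L_m u w - u (L_m w)`.
-/

theorem Finsupp.mem_support_add_single {ι M : Type*} [DecidableEq ι] [AddZeroClass M]
    {g : ι →₀ M} {s j : ι} {n : M} (hj : j ∈ (g + single s n).support) : j ∈ g.support ∨ j = s := by
  rcases Finset.mem_union.1 (support_add hj) with hj | hj
  exacts [Or.inl hj, Or.inr (Finset.mem_singleton.1 (support_single_subset hj))]

theorem Finsupp.induction_on_max_add_single_one {ι : Type*} [LinearOrder ι]
    {motive : (ι →₀ ℕ) → Prop} (f : ι →₀ ℕ) (zero : motive 0)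
    (add_single : ∀ (g : ι →₀ ℕ) (s : ι), (∀ j ∈ g.support, j ≤ s) → motive g →
      motive (g + single s 1)) : motive f := by
  refine f.induction_on_max₂ zero fun a b f hf _ hmf => ?_
  have key : ∀ n, motive (f + single a n) := by
    intro n
    induction n with
    | zero => simpa using hmf
    | succ n ih =>
      rw [single_add a n 1, ← add_assoc]
      exact add_single _ _ (fun j hj => (mem_support_add_single hj).elim
        (fun hj => (hf j hj).le) (fun h => h.le)) ih
  exact key b

theorem Submodule.apply_mem_of_mem_span {R M N : Type*} [Semiring R] [AddCommMonoid M]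
    [AddCommMonoid N] [Module R M] [Module R N] (f : M →ₗ[R] N) {s : Set M} {p : Submodule R N}
    (h : ∀ x ∈ s, f x ∈ p) {x : M} (hx : x ∈ span R s) : f x ∈ p :=
  (map_span_le f s p).2 h (mem_map_of_mem hx)

theorem Submodule.ite_smul_mem {R M : Type*} [Semiring R] [AddCommMonoid M] [Module R M]
    {p : Prop} [Decidable p] {c : R} {x : M} {S : Submodule R M} (h : p → x ∈ S) :
    (if p then c else 0) • x ∈ S := by
  split_ifs with hp
  · exact S.smul_mem c (h hp)
  · rw [zero_smul]
    exact S.zero_mem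

section OrderedMonomial

variable {M : Type*} [Monoid M]

theorem List.prod_map_range_reverse_of_le {F : ℕ → M} {m n : ℕ} (hmn : m ≤ n)
    (h : ∀ k, m ≤ k → F k = 1) :
    ((List.range n).reverse.map F).prod = ((List.range m).reverse.map F).prod := by
  induction n, hmn using Nat.le_induction with
  | base => rfl
  | succ n hmn ih =>
    simp only [List.range_succ, List.reverse_append, List.reverse_cons, List.reverse_nil,
      List.nil_append, List.singleton_append, List.map_cons, List.prod_cons, h n hmn, one_mul, ih]

theorem List.mul_prod_map_range_reverse {a : M} {F : ℕ → M} {k n : ℕ} (hk : k < n)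
    (hc : ∀ j, k < j → Commute a (F j)) :
    a * ((List.range n).reverse.map F).prod =
      ((List.range n).reverse.map (Function.update F k (a * F k))).prod := by
  induction n with
  | zero => omega
  | succ n ih =>
    simp only [List.range_succ, List.reverse_append, List.map_append, List.map_cons,
      List.prod_append, List.prod_cons, List.reverse_cons, List.reverse_nil, List.nil_append,
      List.map_nil, List.prod_nil, mul_one]
    rcases (Nat.lt_succ_iff.1 hk).lt_or_eq with hk | rfl
    · rw [← mul_assoc, (hc n hk).eq, mul_assoc, ih hk, Function.update_of_ne hk.ne']
    · rw [Function.update_self, ← mul_assoc]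
      exact congrArg (a * F k * ·) (congrArg List.prod (List.map_congr_left fun j hj =>
        (Function.update_of_ne (List.mem_range.1 (List.mem_reverse.1 hj)).ne _ _).symm))

def orderedMonomial (x : ℕ → M) (f : ℕ →₀ ℕ) : M :=
  ((List.range (f.support.sup id + 1)).reverse.map fun k => x k ^ f k).prod

theorem orderedMonomial_eq {x : ℕ → M} {f : ℕ →₀ ℕ} {n : ℕ} (hn : ∀ k ∈ f.support, k < n) :
    orderedMonomial x f = ((List.range n).reverse.map fun k => x k ^ f k).prod := by
  have hsup : ∀ k, f.support.sup id + 1 ≤ k → x k ^ f k = 1 := fun k hk => by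
    rw [Finsupp.notMem_support_iff.1 fun hf => by
      have := Finset.le_sup (f := id) hf; dsimp only [id_eq] at this; omega, pow_zero]
  rcases le_total (f.support.sup id + 1) n with h | h
  · exact (List.prod_map_range_reverse_of_le h hsup).symm
  · refine List.prod_map_range_reverse_of_le h fun k hk => ?_
    rw [Finsupp.notMem_support_iff.1 fun hf => by have := hn k hf; omega, pow_zero]

theorem orderedMonomial_zero (x : ℕ → M) : orderedMonomial x 0 = 1 := by
  simp [orderedMonomial]

theorem orderedMonomial_add_single {x : ℕ → M} {f : ℕ →₀ ℕ} {s : ℕ}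
    (hc : ∀ j, s < j → Commute (x s) (x j ^ f j)) :
    orderedMonomial x (f + Finsupp.single s 1) = x s * orderedMonomial x f := by
  set n := max (f.support.sup id) s + 1
  have hf : ∀ k ∈ f.support, k < n := fun k hk => by
    have := Finset.le_sup (f := id) hk; dsimp only [id_eq] at this; omega
  have hfs : ∀ k ∈ (f + Finsupp.single s 1).support, k < n := fun k hk =>
    (Finsupp.mem_support_add_single hk).elim (hf k) (fun h => by omega)
  rw [orderedMonomial_eq hfs, orderedMonomial_eq hf,
    List.mul_prod_map_range_reverse (by omega) hc]
  congr 2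
  funext j
  rcases eq_or_ne j s with rfl | hj
  · simp [pow_succ']
  · simp [Function.update_of_ne hj, Ne.symm hj]

end OrderedMonomial

theorem THV.ιV_mul_ιV (V : Type) [LieRing V] [LieAlgebra ℂ V] (x y : V) :
    ιV V x * ιV V y = ιV V y * ιV V x + ιV V ⁅x, y⁆ := by
  rw [LieHom.map_lie, Ring.lie_def]
  abel

theorem THV.commute_ιV_of_lie_eq_zero {V : Type} [LieRing V] [LieAlgebra ℂ V] {x y : V}
    (h : ⁅x, y⁆ = 0) : Commute (ιV V x) (ιV V y) := by
  rw [Commute, SemiconjBy, ιV_mul_ιV, h, map_zero, add_zero]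

namespace THV

open Submodule

theorem pdeg_zero : pdeg 0 = 0 := Finsupp.sum_zero_index

theorem pdeg_add_single (f : ℕ →₀ ℕ) (s : ℕ) : pdeg (f + Finsupp.single s 1) = pdeg f + s := by
  unfold pdeg
  rw [Finsupp.sum_add_index' (fun _ => by ring) (fun _ _ _ => by ring),
    Finsupp.sum_single_index (by ring), mul_one]

variable (V : Type) [LieRing V] [LieAlgebra ℂ V] [THV V]

theorem ιV_L_mul_L (a b : ℤ) : ιV V (L a) * ιV V (L b) = ιV V (L b) * ιV V (L a) +
    ((b : ℂ) - a) • ιV V (L (a + b)) +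
      (if b = -a then ((a : ℂ) ^ 3 - a) / 12 else 0) • ιV V (z 0) := by
  rw [ιV_mul_ιV, lie_LL, map_add, map_smul, map_smul, add_assoc]

theorem ιV_L_mul_I (a b : ℤ) : ιV V (L a) * ιV V (I b) = ιV V (I b) * ιV V (L a) +
    (b : ℂ) • ιV V (I (a + b)) + (if b = -a then (a : ℂ) ^ 2 - a else 0) • ιV V (z 1) := by
  rw [ιV_mul_ιV, lie_LI, map_add, map_smul, map_smul, add_assoc]

theorem ιV_I_mul_L (a b : ℤ) : ιV V (I a) * ιV V (L b) = ιV V (L b) * ιV V (I a) -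
    (a : ℂ) • ιV V (I (b + a)) - (if a = -b then (b : ℂ) ^ 2 - b else 0) • ιV V (z 1) := by
  rw [ιV_L_mul_I]
  abel

theorem ιV_I_mul_I (a b : ℤ) : ιV V (I a) * ιV V (I b) = ιV V (I b) * ιV V (I a) +
    (if b = -a then (a : ℂ) else 0) • ιV V (z 2) := by
  rw [ιV_mul_ιV, lie_II, map_smul]

theorem commute_ιV_I_neg (i j : ℕ) : Commute (ιV V (I (-i))) (ιV V (I (-j))) := by
  rw [Commute, SemiconjBy, ιV_I_mul_I]
  split_ifs with h
  · simp [show i = 0 by omega]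
  · simp

theorem lie_I_zero (y : V) : ⁅(I 0 : V), y⁆ = 0 := by
  suffices h : LieAlgebra.ad ℂ V (I 0) = 0 from LinearMap.congr_fun h y
  refine (basis (V := V)).ext fun b => ?_
  rcases b with k | k | i
  · rw [LieAlgebra.ad_apply, basis_L, ← lie_skew, lie_LI]
    split_ifs with h
    · simp [show k = 0 by omega]
    · simp
  · rw [LieAlgebra.ad_apply, basis_I, lie_II]
    split_ifs <;> simp
  · rw [LieAlgebra.ad_apply, basis_z, ← lie_skew, lie_z, neg_zero, LinearMap.zero_apply]

theorem zElt_commute_ιV (c : Fin 4) (y : V) : Commute (zElt V c) (ιV V y) := by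
  fin_cases c
  · exact commute_ιV_of_lie_eq_zero (lie_I_zero V y)
  all_goals exact commute_ιV_of_lie_eq_zero (lie_z _ y)

theorem zElt_commute_zElt (c d : Fin 4) : Commute (zElt V c) (zElt V d) := by
  fin_cases d <;> exact zElt_commute_ιV V c _

theorem zword_commute_ιV (t : Fin 4 → ℕ) (y : V) : Commute (zword V t) (ιV V y) :=
  Commute.list_prod_left _ _ fun _ hx => by
    obtain ⟨c, -, rfl⟩ := List.mem_map.1 hx
    exact (zElt_commute_ιV V c y).pow_left _

theorem zElt_mul_zword (c : Fin 4) (t : Fin 4 → ℕ) :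
    zElt V c * zword V t = zword V (t + Pi.single c 1) := by
  have h (c d : Fin 4) := (zElt_commute_zElt V c d).pow_right (t d)
  fin_cases c <;>
    simp [zword, List.finRange_succ, Pi.single_apply, pow_succ', mul_assoc, (h 1 0).left_comm,
      (h 2 0).left_comm, (h 2 1).left_comm, (h 3 0).left_comm, (h 3 1).left_comm,
      (h 3 2).left_comm]

theorem Lword_eq_orderedMonomial (f : ℕ →₀ ℕ) :
    Lword V f = orderedMonomial (fun k => ιV V (L (-k))) f := rfl

theorem Iword_eq_orderedMonomial (f : ℕ →₀ ℕ) :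
    Iword V f = orderedMonomial (fun k => ιV V (I (-k))) f := rfl

theorem Lword_zero : Lword V 0 = 1 := orderedMonomial_zero _

theorem Iword_zero : Iword V 0 = 1 := orderedMonomial_zero _

theorem Lword_add_single {f : ℕ →₀ ℕ} {s : ℕ} (hs : ∀ j ∈ f.support, j ≤ s) :
    Lword V (f + Finsupp.single s 1) = ιV V (L (-s)) * Lword V f := by
  rw [Lword_eq_orderedMonomial, Lword_eq_orderedMonomial]
  refine orderedMonomial_add_single fun j hj => ?_
  rw [Finsupp.notMem_support_iff.1 fun h => (hs j h).not_gt hj, pow_zero]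
  exact Commute.one_right _

theorem Iword_add_single (f : ℕ →₀ ℕ) (i : ℕ) :
    Iword V (f + Finsupp.single i 1) = ιV V (I (-i)) * Iword V f := by
  rw [Iword_eq_orderedMonomial, Iword_eq_orderedMonomial]
  exact orderedMonomial_add_single fun j _ => (commute_ιV_I_neg V i j).pow_right _

noncomputable def LwordSpan (d : ℕ) : Submodule ℂ (UEA V) :=
  span ℂ (Lword V '' {γ | pdeg γ ≤ d})

theorem LwordSpan_mono {d d' : ℕ} (h : d ≤ d') : LwordSpan V d ≤ LwordSpan V d' :=
  span_mono (Set.image_mono fun _ hγ => le_trans hγ h)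

theorem Lword_mem_LwordSpan {γ : ℕ →₀ ℕ} {d : ℕ} (h : pdeg γ ≤ d) :
    Lword V γ ∈ LwordSpan V d :=
  subset_span ⟨γ, h, rfl⟩

theorem mul_mem_of_mem_LwordSpan {a : UEA V} {T : Submodule ℂ (UEA V)} {d : ℕ}
    (h : ∀ γ, pdeg γ ≤ d → a * Lword V γ ∈ T) {u : UEA V} (hu : u ∈ LwordSpan V d) :
    a * u ∈ T :=
  apply_mem_of_mem_span (LinearMap.mulLeft ℂ a) (Set.forall_mem_image.2 h) hu

/- Strong induction on `|β|`: if `β = g + (s)` with `s = max β > k`, then both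
`L_{-s} (L_{-k} L_{-g})` and `L_{-k-s} L_{-g}` apply a single mode to monomials of
weight `< |β|`. -/
theorem ιV_L_neg_mul_Lword_mem_LwordSpan (k : ℕ) (β : ℕ →₀ ℕ) :
    ιV V (L (-k)) * Lword V β ∈ LwordSpan V (k + pdeg β) := by
  induction h : pdeg β using Nat.strong_induction_on generalizing k β with
  | _ n ih =>
  subst h
  induction β using Finsupp.induction_on_max_add_single_one with
  | zero =>
    rw [← Lword_add_single V (f := 0) (s := k) (by simp)]
    exact Lword_mem_LwordSpan V (by rw [pdeg_add_single, pdeg_zero]; omega)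
  | add_single g s hs _ =>
    by_cases hsk : s ≤ k
    · have hk : ∀ j ∈ (g + Finsupp.single s 1).support, j ≤ k := fun j hj =>
        (Finsupp.mem_support_add_single hj).elim (fun hj => (hs j hj).trans hsk) (· ▸ hsk)
      rw [← Lword_add_single V hk]
      exact Lword_mem_LwordSpan V (by rw [pdeg_add_single, add_comm])
    rw [Lword_add_single V hs, ← mul_assoc, ιV_L_mul_L, if_neg (by omega), zero_smul,
      add_zero, add_mul, mul_assoc, smul_mul_assoc,
      show -(k : ℤ) + -s = -((k + s : ℕ) : ℤ) by push_cast; ring]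
    have hlt : pdeg g < pdeg (g + Finsupp.single s 1) := by rw [pdeg_add_single]; omega
    refine add_mem ?_ (smul_mem _ _ ?_)
    · refine mul_mem_of_mem_LwordSpan V (fun γ hγ => ?_) (ih _ hlt k g rfl)
      refine LwordSpan_mono V ?_ (ih _ (by rw [pdeg_add_single] at hlt ⊢; omega) s γ rfl)
      rw [pdeg_add_single]
      omega
    · exact LwordSpan_mono V (by rw [pdeg_add_single]; omega) (ih _ hlt (k + s) g rfl)

theorem ιV_I_neg_mul_Lword_mem_span {i : ℕ} (hi : 1 ≤ i) (β : ℕ →₀ ℕ) :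
    ιV V (I (-i)) * Lword V β ∈ span ℂ {u | ∃ γ j, 1 ≤ j ∧ pdeg γ + j ≤ i + pdeg β ∧
      u = Lword V γ * ιV V (I (-j))} := by
  induction β using Finsupp.induction_on_max_add_single_one generalizing i with
  | zero => exact subset_span ⟨0, i, hi, by rw [pdeg_zero]; omega, by simp [Lword_zero]⟩
  | add_single g s hs ih =>
    rw [Lword_add_single V hs, ← mul_assoc, ιV_I_mul_L, if_neg (by omega), zero_smul, sub_zero,
      sub_mul, mul_assoc, smul_mul_assoc,
      show -(s : ℤ) + -i = -((i + s : ℕ) : ℤ) by push_cast; ring]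
    refine sub_mem ?_ (smul_mem _ _ ?_)
    · refine apply_mem_of_mem_span (LinearMap.mulLeft ℂ (ιV V (L (-s)))) ?_ (ih hi)
      rintro _ ⟨γ, j, hj, hγj, rfl⟩
      rw [LinearMap.mulLeft_apply, ← mul_assoc]
      refine apply_mem_of_mem_span (LinearMap.mulRight ℂ (ιV V (I (-j)))) ?_
        (ιV_L_neg_mul_Lword_mem_LwordSpan V s γ)
      rintro _ ⟨δ, hδ : pdeg δ ≤ s + pdeg γ, rfl⟩
      exact subset_span ⟨δ, j, hj, by rw [pdeg_add_single]; omega, rfl⟩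
    · refine span_mono ?_ (ih (i := i + s) (by omega))
      rintro _ ⟨γ, j, hj, hγj, rfl⟩
      exact ⟨γ, j, hj, by rw [pdeg_add_single]; omega, rfl⟩

inductive IsLoweringMonomial : ℕ → UEA V → Prop
  | one : IsLoweringMonomial 0 1
  | L_mul {N : ℕ} {u : UEA V} (s : ℕ) :
      IsLoweringMonomial N u → IsLoweringMonomial (s + N) (ιV V (L (-s)) * u)
  | I_mul {N : ℕ} {u : UEA V} (i : ℕ) :
      IsLoweringMonomial N u → IsLoweringMonomial (i + N) (ιV V (I (-i)) * u)

theorem isLoweringMonomial_Lword (f : ℕ →₀ ℕ) : IsLoweringMonomial V (pdeg f) (Lword V f) := by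
  induction f using Finsupp.induction_on_max_add_single_one with
  | zero => simpa [pdeg_zero, Lword_zero] using IsLoweringMonomial.one
  | add_single g s hs ih =>
    rw [Lword_add_single V hs, pdeg_add_single, add_comm]
    exact ih.L_mul s

theorem isLoweringMonomial_Iword (f : ℕ →₀ ℕ) : IsLoweringMonomial V (pdeg f) (Iword V f) := by
  induction f using Finsupp.induction_on_max_add_single_one with
  | zero => simpa [pdeg_zero, Iword_zero] using IsLoweringMonomial.one (V := V)
  | add_single g s _ ih =>
    rw [Iword_add_single, pdeg_add_single, add_comm]
    exact ih.I_mul s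

variable (ψ : nPlus V →ₗ⁅ℂ⁆ ℂ)

noncomputable def degFiltration (N : ℤ) : Submodule ℂ (Mpsi V ψ) :=
  span ℂ {v | ∃ t α ν, ν 0 = 0 ∧ (pdeg α : ℤ) + pdeg ν ≤ N ∧
    v = (zword V t * Lword V α * Iword V ν) • mw V ψ}

theorem degFiltration_mono {N N' : ℤ} (h : N ≤ N') :
    degFiltration V ψ N ≤ degFiltration V ψ N' :=
  span_mono fun _ ⟨t, α, ν, h0, hd, hv⟩ => ⟨t, α, ν, h0, hd.trans h, hv⟩

theorem stdVector_mem_degFiltration (t : Fin 4 → ℕ) {α ν : ℕ →₀ ℕ} {N : ℤ} (h0 : ν 0 = 0)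
    (hd : (pdeg α : ℤ) + pdeg ν ≤ N) :
    (zword V t * Lword V α * Iword V ν) • mw V ψ ∈ degFiltration V ψ N :=
  subset_span ⟨t, α, ν, h0, hd, rfl⟩

theorem mw_mem_degFiltration : mw V ψ ∈ degFiltration V ψ 0 := by
  simpa [zword, pdeg_zero, Lword_zero, Iword_zero] using
    stdVector_mem_degFiltration V ψ 0 (α := 0) (ν := 0) rfl (by simp [pdeg_zero])

theorem maxdeg_le_of_mem_degFiltration {B : Module.Basis WIdx ℂ (Mpsi V ψ)}
    (hB : IsStdBasis V ψ B) {v : Mpsi V ψ} {N : ℤ} (hv : v ∈ degFiltration V ψ N) :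
    maxdeg V ψ B v ≤ N := by
  have hspan : v ∈ span ℂ (B '' {p | (pdeg p.2.1 : ℤ) + pdeg p.2.2.1 ≤ N}) := by
    refine span_le.2 ?_ hv
    rintro _ ⟨t, α, ν, h0, hd, rfl⟩
    exact subset_span ⟨(t, α, ⟨ν, h0⟩), hd, hB t α ⟨ν, h0⟩⟩
  rw [Module.Basis.mem_span_image] at hspan
  refine Finset.max_le fun _ ha => ?_
  obtain ⟨p, hp, rfl⟩ := Finset.mem_image.1 ha
  exact WithBot.coe_le_coe.2 (hspan hp)

theorem smul_mem_degFiltration {u : UEA V} {M M' : ℤ}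
    (h : ∀ t α ν, ν 0 = 0 → (pdeg α : ℤ) + pdeg ν ≤ M →
      (u * (zword V t * Lword V α * Iword V ν)) • mw V ψ ∈ degFiltration V ψ M')
    {v : Mpsi V ψ} (hv : v ∈ degFiltration V ψ M) : u • v ∈ degFiltration V ψ M' := by
  refine apply_mem_of_mem_span (DistribSMul.toLinearMap ℂ (Mpsi V ψ) u) ?_ hv
  rintro _ ⟨t, α, ν, h0, hd, rfl⟩
  rw [DistribSMul.toLinearMap_apply, ← mul_smul]
  exact h t α ν h0 hd

theorem smul_mw_mem_degFiltration_of_mem_span {t : Fin 4 → ℕ} {ν : ℕ →₀ ℕ} {u : UEA V}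
    {S : Set (UEA V)} {M : ℤ}
    (h : ∀ x ∈ S, (zword V t * x * Iword V ν) • mw V ψ ∈ degFiltration V ψ M)
    (hu : u ∈ span ℂ S) : (zword V t * u * Iword V ν) • mw V ψ ∈ degFiltration V ψ M :=
  apply_mem_of_mem_span ((LinearMap.mulLeftRight ℂ (zword V t, Iword V ν)).smulRight (mw V ψ))
    h hu

theorem zElt_smul_mem_degFiltration (c : Fin 4) {M : ℤ} {v : Mpsi V ψ}
    (hv : v ∈ degFiltration V ψ M) : zElt V c • v ∈ degFiltration V ψ M := by
  refine smul_mem_degFiltration V ψ (fun t α ν h0 hd => ?_) hv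
  rw [← mul_assoc, ← mul_assoc, zElt_mul_zword]
  exact stdVector_mem_degFiltration V ψ _ h0 hd

theorem ιV_L_neg_smul_mem_degFiltration (s : ℕ) {M : ℤ} {v : Mpsi V ψ}
    (hv : v ∈ degFiltration V ψ M) : ιV V (L (-s)) • v ∈ degFiltration V ψ (M + s) := by
  refine smul_mem_degFiltration V ψ (fun t α ν h0 hd => ?_) hv
  rw [← mul_assoc, ← mul_assoc, ← (zword_commute_ιV V t _).eq, mul_assoc (zword V t)]
  refine smul_mw_mem_degFiltration_of_mem_span V ψ ?_
    (ιV_L_neg_mul_Lword_mem_LwordSpan V s α)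
  rintro _ ⟨γ, hγ : pdeg γ ≤ s + pdeg α, rfl⟩
  exact stdVector_mem_degFiltration V ψ t h0 (by omega)

theorem ιV_I_neg_smul_mem_degFiltration (i : ℕ) {M : ℤ} {v : Mpsi V ψ}
    (hv : v ∈ degFiltration V ψ M) : ιV V (I (-i)) • v ∈ degFiltration V ψ (M + i) := by
  rcases Nat.eq_zero_or_pos i with rfl | hi
  · simp only [Nat.cast_zero, neg_zero, add_zero]
    exact zElt_smul_mem_degFiltration V ψ 0 hv
  refine smul_mem_degFiltration V ψ (fun t α ν h0 hd => ?_) hv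
  rw [← mul_assoc, ← mul_assoc, ← (zword_commute_ιV V t _).eq, mul_assoc (zword V t)]
  refine smul_mw_mem_degFiltration_of_mem_span V ψ ?_ (ιV_I_neg_mul_Lword_mem_span V hi α)
  rintro _ ⟨γ, j, hj, hγj, rfl⟩
  rw [mul_assoc (zword V t), mul_assoc (Lword V γ), ← Iword_add_single, ← mul_assoc]
  refine stdVector_mem_degFiltration V ψ t ?_ (by rw [pdeg_add_single]; omega)
  rw [Finsupp.add_apply, h0, Finsupp.single_eq_of_ne (by omega), add_zero]

theorem ιV_smul_mw {x : V} (hx : x ∈ nPlus V) : ιV V x • mw V ψ = ψ ⟨x, hx⟩ • mw V ψ := by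
  rw [mw, ← Submodule.Quotient.mk_smul, ← Submodule.Quotient.mk_smul, Submodule.Quotient.eq,
    smul_eq_mul, mul_one, Algebra.smul_def, mul_one]
  exact subset_span ⟨⟨x, hx⟩, rfl⟩

theorem map_eq_zero_of_lie_eq_smul {x y e : nPlus V} {c : ℂ} (hc : c ≠ 0)
    (h : ⁅x, y⁆ = c • e) : ψ e = 0 := by
  have := ψ.map_lie x y
  rwa [Ring.lie_def, mul_comm, sub_self, h, map_smul, smul_eq_mul, mul_eq_zero,
    or_iff_right hc] at this

theorem map_L_eq_zero {k : ℤ} (hk : 3 ≤ k) : ψ ⟨L k, L_mem_nPlus V (by omega)⟩ = 0 := by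
  refine map_eq_zero_of_lie_eq_smul V ψ (x := ⟨L 1, L_mem_nPlus V le_rfl⟩)
    (y := ⟨L (k - 1), L_mem_nPlus V (by omega)⟩) (c := k - 2)
    (sub_ne_zero.2 (by exact_mod_cast (by omega : k ≠ 2))) (Subtype.ext ?_)
  simp only [LieSubalgebra.coe_bracket, lie_LL, show k - 1 ≠ -1 by omega, if_false, zero_smul,
    add_zero, add_sub_cancel, SetLike.mk_smul_mk]
  congr 1
  push_cast
  ring

theorem map_I_eq_zero {k : ℤ} (hk : 2 ≤ k) : ψ ⟨I k, I_mem_nPlus V (by omega)⟩ = 0 := by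
  refine map_eq_zero_of_lie_eq_smul V ψ (x := ⟨L 1, L_mem_nPlus V le_rfl⟩)
    (y := ⟨I (k - 1), I_mem_nPlus V (by omega)⟩) (c := k - 1)
    (sub_ne_zero.2 (by exact_mod_cast (by omega : k ≠ 1))) (Subtype.ext ?_)
  simp [lie_LI, show k - 1 ≠ -1 by omega]

theorem ιV_L_smul_mw_mem_degFiltration (k : ℤ) :
    ιV V (L k) • mw V ψ ∈ degFiltration V ψ (2 - k) := by
  rcases le_or_gt k 0 with hk | hk
  · obtain ⟨s, rfl⟩ := Int.exists_eq_neg_ofNat hk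
    exact degFiltration_mono V ψ (by omega)
      (ιV_L_neg_smul_mem_degFiltration V ψ s (mw_mem_degFiltration V ψ))
  rw [ιV_smul_mw V ψ (L_mem_nPlus V hk)]
  rcases le_or_gt k 2 with hk2 | hk2
  · exact smul_mem _ _ (degFiltration_mono V ψ (by omega) (mw_mem_degFiltration V ψ))
  · rw [map_L_eq_zero V ψ hk2, zero_smul]
    exact zero_mem _

theorem ιV_I_smul_mw_mem_degFiltration (k : ℤ) :
    ιV V (I k) • mw V ψ ∈ degFiltration V ψ (1 - k) := by
  rcases le_or_gt k 0 with hk | hk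
  · obtain ⟨i, rfl⟩ := Int.exists_eq_neg_ofNat hk
    exact degFiltration_mono V ψ (by omega)
      (ιV_I_neg_smul_mem_degFiltration V ψ i (mw_mem_degFiltration V ψ))
  rw [ιV_smul_mw V ψ (I_mem_nPlus V hk)]
  rcases le_or_gt k 1 with hk1 | hk1
  · exact smul_mem _ _ (degFiltration_mono V ψ (by omega) (mw_mem_degFiltration V ψ))
  · rw [map_I_eq_zero V ψ hk1, zero_smul]
    exact zero_mem _

variable {V ψ}

namespace IsLoweringMonomial

variable {N : ℕ} {u : UEA V}

theorem mul {M : ℕ} {v : UEA V} (hu : IsLoweringMonomial V N u)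
    (hv : IsLoweringMonomial V M v) : IsLoweringMonomial V (N + M) (u * v) := by
  induction hu with
  | one => simpa using hv
  | L_mul s _ ih => simpa [mul_assoc, add_assoc] using ih.L_mul s
  | I_mul i _ ih => simpa [mul_assoc, add_assoc] using ih.I_mul i

theorem smul_mem_degFiltration (hu : IsLoweringMonomial V N u) {M : ℤ} {v : Mpsi V ψ}
    (hv : v ∈ degFiltration V ψ M) : u • v ∈ degFiltration V ψ (M + N) := by
  induction hu with
  | one => simpa using hv
  | L_mul s _ ih =>
    rw [mul_smul]
    exact degFiltration_mono V ψ (by push_cast; omega) (ιV_L_neg_smul_mem_degFiltration V ψ s ih)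
  | I_mul i _ ih =>
    rw [mul_smul]
    exact degFiltration_mono V ψ (by push_cast; omega) (ιV_I_neg_smul_mem_degFiltration V ψ i ih)

theorem zElt_mul_smul_mw_mem_degFiltration (hu : IsLoweringMonomial V N u) (c : Fin 4) :
    (zElt V c * u) • mw V ψ ∈ degFiltration V ψ N := by
  rw [mul_smul]
  simpa only [zero_add] using
    zElt_smul_mem_degFiltration V ψ c (hu.smul_mem_degFiltration (mw_mem_degFiltration V ψ))

theorem ιV_I_mul_smul_mw_mem_degFiltration (hu : IsLoweringMonomial V N u) (k : ℤ) :
    (ιV V (I k) * u) • mw V ψ ∈ degFiltration V ψ (N + 1 - k) := by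
  induction hu generalizing k with
  | one => simpa using ιV_I_smul_mw_mem_degFiltration V ψ k
  | @L_mul N u s hu ih =>
    rw [← mul_assoc, ιV_I_mul_L, sub_mul, sub_mul, smul_mul_assoc, smul_mul_assoc, mul_assoc,
      sub_smul, sub_smul, smul_assoc, smul_assoc, mul_smul (ιV V (L _))]
    refine sub_mem (sub_mem ?_ (smul_mem _ _ ?_)) (ite_smul_mem fun h => ?_)
    · exact degFiltration_mono V ψ (by push_cast; omega)
        (ιV_L_neg_smul_mem_degFiltration V ψ s (ih k))
    · exact degFiltration_mono V ψ (by push_cast; omega) (ih _)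
    · exact degFiltration_mono V ψ (by push_cast; omega)
        (hu.zElt_mul_smul_mw_mem_degFiltration 2)
  | @I_mul N u i hu ih =>
    rw [← mul_assoc, ιV_I_mul_I, add_mul, smul_mul_assoc, mul_assoc, add_smul, smul_assoc,
      mul_smul (ιV V (I _))]
    refine add_mem ?_ (ite_smul_mem fun h => ?_)
    · exact degFiltration_mono V ψ (by push_cast; omega)
        (ιV_I_neg_smul_mem_degFiltration V ψ i (ih k))
    · exact degFiltration_mono V ψ (by push_cast; omega)
        (hu.zElt_mul_smul_mw_mem_degFiltration 3)

theorem ιV_L_mul_smul_mw_mem_degFiltration (hu : IsLoweringMonomial V N u) (k : ℤ) :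
    (ιV V (L k) * u) • mw V ψ ∈ degFiltration V ψ (N + 2 - k) := by
  induction hu generalizing k with
  | one => simpa using ιV_L_smul_mw_mem_degFiltration V ψ k
  | @L_mul N u s hu ih =>
    rw [← mul_assoc, ιV_L_mul_L, add_mul, add_mul, smul_mul_assoc, smul_mul_assoc, mul_assoc,
      add_smul, add_smul, smul_assoc, smul_assoc, mul_smul (ιV V (L _))]
    refine add_mem (add_mem ?_ (smul_mem _ _ ?_)) (ite_smul_mem fun h => ?_)
    · exact degFiltration_mono V ψ (by push_cast; omega)
        (ιV_L_neg_smul_mem_degFiltration V ψ s (ih k))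
    · exact degFiltration_mono V ψ (by push_cast; omega) (ih _)
    · exact degFiltration_mono V ψ (by push_cast; omega)
        (hu.zElt_mul_smul_mw_mem_degFiltration 1)
  | @I_mul N u i hu ih =>
    rw [← mul_assoc, ιV_L_mul_I, add_mul, add_mul, smul_mul_assoc, smul_mul_assoc, mul_assoc,
      add_smul, add_smul, smul_assoc, smul_assoc, mul_smul (ιV V (I _))]
    refine add_mem (add_mem ?_ (smul_mem _ _ ?_)) (ite_smul_mem fun h => ?_)
    · exact degFiltration_mono V ψ (by push_cast; omega)
        (ιV_I_neg_smul_mem_degFiltration V ψ i (ih k))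
    · exact degFiltration_mono V ψ (by push_cast; omega)
        (hu.ιV_I_mul_smul_mw_mem_degFiltration _)
    · exact degFiltration_mono V ψ (by push_cast; omega)
        (hu.zElt_mul_smul_mw_mem_degFiltration 2)

end IsLoweringMonomial

end THV

open THV in
theorem maxdeg_bracket_L_le_general
    (V : Type) [LieRing V] [LieAlgebra ℂ V] [THV V]
    (ψ : nPlus V →ₗ⁅ℂ⁆ ℂ)
    (B : Module.Basis WIdx ℂ (Mpsi V ψ)) (hB : IsStdBasis V ψ B)
    (m : ℤ) (lam : ℕ →₀ ℕ) (mu : ℕ →₀ ℕ) :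
    maxdeg V ψ B (⁅ιV V (THV.L m), Lword V lam * Iword V mu⁆ • mw V ψ)
      ≤ (((pdeg lam : ℤ) + (pdeg mu : ℤ) - m + 2 : ℤ) : WithBot ℤ) := by
  have hu := (isLoweringMonomial_Lword V lam).mul (isLoweringMonomial_Iword V mu)
  refine maxdeg_le_of_mem_degFiltration V ψ hB
    (degFiltration_mono V ψ (N := (pdeg lam + pdeg mu : ℕ) + 2 - m) (by push_cast; omega) ?_)
  rw [Ring.lie_def, sub_smul, mul_smul (Lword V lam * Iword V mu)]
  refine sub_mem (hu.ιV_L_mul_smul_mw_mem_degFiltration m)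
    (degFiltration_mono V ψ ?_ (hu.smul_mem_degFiltration (ιV_L_smul_mw_mem_degFiltration V ψ m)))
  omega

open THV in
/-- `maxdeg([L_m, L_{−λ}I_{−μ}]w) ≤ |λ| + |μ| − m + 2`. -/
theorem maxdeg_bracket_L_le
    (V : Type) [LieRing V] [LieAlgebra ℂ V] [THV V]
    (ψ : nPlus V →ₗ⁅ℂ⁆ ℂ)
    (hL1 : ψ ⟨THV.L 1, L_mem_nPlus V le_rfl⟩ ≠ 0)
    (hL2 : ψ ⟨THV.L 2, L_mem_nPlus V one_le_two⟩ ≠ 0)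
    (hI1 : ψ ⟨THV.I 1, I_mem_nPlus V le_rfl⟩ ≠ 0)
    (B : Module.Basis WIdx ℂ (Mpsi V ψ)) (hB : IsStdBasis V ψ B)
    (m : ℤ) (hm : 0 ≤ m) (lam : ℕ →₀ ℕ) (mu : ℕ →₀ ℕ) (hmu : mu 0 = 0) :
    maxdeg V ψ B (⁅ιV V (THV.L m), Lword V lam * Iword V mu⁆ • mw V ψ)
      ≤ (((pdeg lam : ℤ) + (pdeg mu : ℤ) - m + 2 : ℤ) : WithBot ℤ) :=
  maxdeg_bracket_L_le_general V ψ B hB m lam mu
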